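/- Let u : ℝ² → ℝ² be C², globally Lipschitz, with divergence ∇·u, and let x̄ : ℝ → ℝ² solve x̄′(p) = u(x̄(p)) with u(x̄(p)) ≠ 0 for every p. Fix p^u < p^d and suppose (closed-interface condition) x̄ is periodic with period p^d − p^u, so a := x̄(p^u) = x̄(p^d), and that w(a,t) = 0 for all t. Define M^u_ε(p,t) := ε ∫_{p^u}^{p} exp(∫_τ^p (∇·u)(x̄(ξ)) dξ) ⟨J u(x̄(τ)), w(x̄(τ), τ + t − p)⟩ dτ for all p ∈ ℝ. Then for every P > 0 there exist C > 0 and ε₀ > 0 such that for all p ∈ [−P, P], all t ∈ ℝ, and all ε ∈ (0, ε₀], |⟨x_ε^u(p,t) − x̄(p), n̂(p)⟩ − M^u_ε(p,t)/|u(x̄(p))|| ≤ C ε². -/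

import Mathlib

open scoped InnerProductSpace NNReal

noncomputable section

/-- The plane with its Euclidean inner product. -/
abbrev E2 : Type := EuclideanSpace ℝ (Fin 2)

/-- Rotation by +π/2 : J(x₁,x₂) = (−x₂, x₁). -/
noncomputable def Jrot : E2 → E2 :=
  fun x => (WithLp.equiv 2 (Fin 2 → ℝ)).symm ![-(x 1), x 0]

/-- Divergence of a planar vector field, as the trace of its Fréchet derivative. -/
noncomputable def div2 (u : E2 → E2) (x : E2) : ℝ :=
  LinearMap.trace ℝ E2 (fderiv ℝ u x).toLinearMap

/-- The leading-order upstream streakline displacement function (closed interface). -/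
noncomputable def MuClosed (u : E2 → E2) (xbar : ℝ → E2) (w : E2 → ℝ → E2)
    (pu ε p t : ℝ) : ℝ :=
  ε * ∫ τ in pu..p,
    Real.exp (∫ ξ in τ..p, div2 u (xbar ξ)) *
      ⟪Jrot (u (xbar τ)), w (xbar τ) (τ + t - p)⟫_ℝ

/-!
Write `y(σ) = X(σ + t - p) - x̄(σ)` for the deviation of the agitated trajectory, re-parametrised
so that it starts at `y(pᵘ) = 0`. Grönwall's inequality gives `‖y‖ = O(ε)` on the window between
`pᵘ` and `p`, so `y` solves the variational equation `y' = Du(x̄) y + ε w(x̄, ·) + O(ε²)`.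
Along that equation the weighted normal component `exp(-∫ div u) ⟪y, J u(x̄)⟫` has derivative
equal to the forcing paired with `J u(x̄)`, because `⟪A v, J z⟫ + ⟪v, J (A z)⟫ = tr A ⟪v, J z⟫`
in the plane. Integrating from `pᵘ` to `p` produces exactly `M^u_ε` up to `O(ε²)`; all constants
are uniform because they come from compactness of the window `[-(|pᵘ| + P), |pᵘ| + P]`.
-/

open Real Set Metric

lemma Jrot_apply_zero (x : E2) : Jrot x 0 = -x 1 := rfl

lemma Jrot_apply_one (x : E2) : Jrot x 1 = x 0 := rfl

def JrotCLM : E2 →L[ℝ] E2 :=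
  LinearMap.toContinuousLinearMap
    { toFun := Jrot
      map_add' := fun x y => by
        ext i; fin_cases i <;> simp [Jrot_apply_zero, Jrot_apply_one, add_comm]
      map_smul' := fun c x => by ext i; fin_cases i <;> simp [Jrot_apply_zero, Jrot_apply_one] }

lemma norm_Jrot (x : E2) : ‖Jrot x‖ = ‖x‖ := by
  simp [EuclideanSpace.norm_eq, Fin.sum_univ_two, Jrot_apply_zero, Jrot_apply_one, add_comm]

lemma inner_E2 (x y : E2) : ⟪x, y⟫_ℝ = x 0 * y 0 + x 1 * y 1 := by
  simp [PiLp.inner_apply, Fin.sum_univ_two, mul_comm]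

/-- In the plane `⟪v, J z⟫ = det (z, v)`, so this is the derivative of the determinant along a
linear flow: `det (A z, v) + det (z, A v) = tr A · det (z, v)`. -/
lemma inner_map_Jrot_add_inner_Jrot_map (A : E2 →ₗ[ℝ] E2) (v z : E2) :
    ⟪A v, Jrot z⟫_ℝ + ⟪v, Jrot (A z)⟫_ℝ = LinearMap.trace ℝ E2 A * ⟪v, Jrot z⟫_ℝ := by
  set e := EuclideanSpace.basisFun (Fin 2) ℝ
  have hA : ∀ (x : E2) (i : Fin 2), A x i = x 0 * A (e 0) i + x 1 * A (e 1) i := by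
    intro x i
    conv_lhs => rw [← e.toBasis.sum_repr x]
    simp [Fin.sum_univ_two, e]
  have htr : LinearMap.trace ℝ E2 A = A (e 0) 0 + A (e 1) 1 := by
    rw [LinearMap.trace_eq_matrix_trace ℝ e.toBasis]
    simp [Matrix.trace, LinearMap.toMatrix_apply, Fin.sum_univ_two, e]
  simp only [inner_E2, Jrot_apply_zero, Jrot_apply_one, hA v, hA z, htr]
  ring

lemma continuous_div2 {u : E2 → E2} (hu : ContDiff ℝ 1 u) : Continuous (div2 u) :=
  ((LinearMap.trace ℝ E2).comp (ContinuousLinearMap.coeLM ℝ)).continuous_of_finiteDimensional.comp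
    (hu.continuous_fderiv one_ne_zero)

section Estimates

variable {E F : Type*} [NormedAddCommGroup E] [NormedSpace ℝ E]
  [NormedAddCommGroup F] [NormedSpace ℝ F]

lemma norm_add_sub_sub_fderiv_le {u : E → F} (hu : ContDiff ℝ 2 u) {x y : E} {M : ℝ}
    (hM : ∀ ξ ∈ closedBall x ‖y‖, ‖fderiv ℝ (fderiv ℝ u) ξ‖ ≤ M) :
    ‖u (x + y) - u x - fderiv ℝ u x y‖ ≤ M * ‖y‖ ^ 2 := by
  have hx : x ∈ closedBall x ‖y‖ := mem_closedBall_self (norm_nonneg y)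
  have hDu : ∀ ξ, HasFDerivAt (fderiv ℝ u) (fderiv ℝ (fderiv ℝ u) ξ) ξ := fun ξ =>
    ((hu.fderiv_right one_add_one_eq_two.le).differentiable one_ne_zero ξ).hasFDerivAt
  have hDu_sub : ∀ ξ ∈ closedBall x ‖y‖, ‖fderiv ℝ u ξ - fderiv ℝ u x‖ ≤ M * ‖y‖ := by
    intro ξ hξ
    calc ‖fderiv ℝ u ξ - fderiv ℝ u x‖ ≤ M * ‖ξ - x‖ :=
          (convex_closedBall x ‖y‖).norm_image_sub_le_of_norm_hasFDerivWithin_le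
            (fun ζ _ => (hDu ζ).hasFDerivWithinAt) hM hx hξ
      _ ≤ M * ‖y‖ :=
          mul_le_mul_of_nonneg_left (by rwa [← dist_eq_norm])
            ((norm_nonneg (fderiv ℝ (fderiv ℝ u) x)).trans (hM x hx))
  have := (convex_closedBall x ‖y‖).norm_image_sub_le_of_norm_hasFDerivWithin_le'
    (fun ζ _ => ((hu.differentiable two_ne_zero ζ).hasFDerivAt).hasFDerivWithinAt) hDu_sub hx
    (show x + y ∈ closedBall x ‖y‖ by simp)
  simpa [sq, mul_assoc] using this

lemma norm_add_smul_sub_sub_fderiv_le {u g : E → F} (hu : ContDiff ℝ 2 u) {Kg : ℝ≥0}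
    (hg : LipschitzWith Kg g) {x y : E} {ε M : ℝ} (hε : 0 ≤ ε)
    (hM : ∀ ξ ∈ closedBall x ‖y‖, ‖fderiv ℝ (fderiv ℝ u) ξ‖ ≤ M) :
    ‖u (x + y) + ε • g (x + y) - (u x + ε • g x) - fderiv ℝ u x y‖
      ≤ M * ‖y‖ ^ 2 + ε * (Kg * ‖y‖) := by
  rw [show u (x + y) + ε • g (x + y) - (u x + ε • g x) - fderiv ℝ u x y
      = (u (x + y) - u x - fderiv ℝ u x y) + ε • (g (x + y) - g x) by module]
  refine norm_add_le_of_le (norm_add_sub_sub_fderiv_le hu hM) ?_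
  rw [norm_smul, Real.norm_of_nonneg hε, ← dist_eq_norm]
  simpa using mul_le_mul_of_nonneg_left (hg.dist_le_mul (x + y) x) hε

lemma norm_le_of_norm_deriv_le_Icc {f f' : ℝ → E} {K δ a b : ℝ} (hK : 0 < K) (hδ : 0 ≤ δ)
    (hf : ∀ s, HasDerivAt f (f' s) s) (ha : f a = 0)
    (hf' : ∀ s ∈ Icc a b, ‖f' s‖ ≤ K * ‖f s‖ + δ) :
    ∀ s ∈ Icc a b, ‖f s‖ ≤ δ / K * exp (K * (b - a)) := by
  intro s hs
  have h := norm_le_gronwallBound_of_norm_deriv_right_le (δ := 0)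
    (fun s _ => (hf s).continuousAt.continuousWithinAt) (fun s _ => (hf s).hasDerivWithinAt)
    (by simp [ha]) (fun s hs => hf' s (Ico_subset_Icc_self hs)) s hs
  simp only [gronwallBound_of_K_ne_0 hK.ne', zero_mul, zero_add] at h
  refine h.trans (mul_le_mul_of_nonneg_left ?_ (div_nonneg hδ hK.le))
  linarith [exp_le_exp.2 (mul_le_mul_of_nonneg_left (sub_le_sub_right hs.2 a) hK.le)]

lemma norm_le_of_norm_deriv_le_uIcc {f f' : ℝ → E} {K δ a b : ℝ} (hK : 0 < K) (hδ : 0 ≤ δ)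
    (hf : ∀ s, HasDerivAt f (f' s) s) (ha : f a = 0)
    (hf' : ∀ s ∈ uIcc a b, ‖f' s‖ ≤ K * ‖f s‖ + δ) :
    ∀ s ∈ uIcc a b, ‖f s‖ ≤ δ / K * exp (K * |b - a|) := by
  rcases le_total a b with hab | hba
  · rw [uIcc_of_le hab] at hf' ⊢
    rw [abs_of_nonneg (sub_nonneg.2 hab)]
    exact norm_le_of_norm_deriv_le_Icc hK hδ hf ha hf'
  · rw [uIcc_of_ge hba] at hf' ⊢
    rw [abs_of_nonpos (sub_nonpos.2 hba), neg_sub]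
    intro s hs
    have hg : ∀ s, HasDerivAt (fun s => f (-s)) (-f' (-s)) s := fun s => by
      simpa [Function.comp_def] using (hf (-s)).scomp s (hasDerivAt_neg s)
    have := norm_le_of_norm_deriv_le_Icc hK hδ hg (by simpa using ha)
      (fun s hs => by simpa using hf' (-s) ⟨le_neg_of_le_neg hs.2, neg_le_of_neg_le hs.1⟩)
      (-s) ⟨neg_le_neg hs.2, neg_le_neg hs.1⟩
    simpa [sub_eq_add_neg, add_comm] using this

lemma norm_sub_le_of_hasDerivAt_perturbed {u : E → E} {K : ℝ≥0} (hu : LipschitzWith K u)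
    {x Y v : ℝ → E} {ε Cv a b : ℝ} (hε : 0 ≤ ε) (hv : ∀ s ∈ uIcc a b, ‖v s‖ ≤ Cv)
    (hx : ∀ s, HasDerivAt x (u (x s)) s) (hY : ∀ s, HasDerivAt Y (u (Y s) + ε • v s) s)
    (ha : Y a = x a) :
    ∀ s ∈ uIcc a b, ‖Y s - x s‖ ≤ ε * (Cv / (K + 1) * exp ((K + 1) * |b - a|)) := by
  have hCv : 0 ≤ Cv := (norm_nonneg _).trans (hv a left_mem_uIcc)
  intro s hs
  refine (norm_le_of_norm_deriv_le_uIcc (K := K + 1) (by positivity) (mul_nonneg hε hCv)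
    (fun s => (hY s).sub (hx s)) (sub_eq_zero.2 ha) (fun s hs => ?_) s hs).trans_eq (by ring)
  calc ‖u (Y s) + ε • v s - u (x s)‖ ≤ ‖u (Y s) - u (x s)‖ + ‖ε • v s‖ := by
        rw [add_sub_right_comm]; exact norm_add_le _ _
    _ ≤ K * ‖Y s - x s‖ + ε * Cv := by
        rw [norm_smul, Real.norm_of_nonneg hε, ← dist_eq_norm, ← dist_eq_norm]
        exact add_le_add (hu.dist_le_mul _ _) (mul_le_mul_of_nonneg_left (hv s hs) hε)
    _ ≤ (K + 1) * ‖Y s - x s‖ + ε * Cv := by nlinarith [norm_nonneg (Y s - x s)]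

end Estimates

section Melnikov

variable {u : E2 → E2} {xbar : ℝ → E2} {D : ℝ → ℝ}

lemma hasDerivAt_exp_neg_mul_inner_Jrot {y R : ℝ → E2} {σ : ℝ}
    (hu : DifferentiableAt ℝ u (xbar σ)) (hxbar : HasDerivAt xbar (u (xbar σ)) σ)
    (hD : HasDerivAt D (div2 u (xbar σ)) σ)
    (hy : HasDerivAt y (fderiv ℝ u (xbar σ) (y σ) + R σ) σ) :
    HasDerivAt (fun s => exp (-D s) * ⟪y s, Jrot (u (xbar s))⟫_ℝ)
      (exp (-D σ) * ⟪R σ, Jrot (u (xbar σ))⟫_ℝ) σ := by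
  have hJu : HasDerivAt (fun s => Jrot (u (xbar s)))
      (Jrot (fderiv ℝ u (xbar σ) (u (xbar σ)))) σ :=
    JrotCLM.hasFDerivAt.comp_hasDerivAt σ (hu.hasFDerivAt.comp_hasDerivAt σ hxbar)
  refine (hD.neg.exp.mul (hy.inner ℝ hJu)).congr_deriv ?_
  have := inner_map_Jrot_add_inner_Jrot_map (fderiv ℝ u (xbar σ)).toLinearMap (y σ) (u (xbar σ))
  rw [inner_add_left, div2]
  linear_combination exp (-D σ) * this

lemma abs_exp_neg_mul_inner_Jrot_sub_integral_le (hu : Differentiable ℝ u)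
    (hxbar : ∀ s, HasDerivAt xbar (u (xbar s)) s) (hD : ∀ s, HasDerivAt D (div2 u (xbar s)) s)
    {y v R : ℝ → E2} {ε δ a b : ℝ} (hv : Continuous v)
    (hy : ∀ s, HasDerivAt y (fderiv ℝ u (xbar s) (y s) + ε • v s + R s) s) (ha : y a = 0)
    (hR : ∀ s ∈ uIcc a b, |exp (-D s) * ⟪R s, Jrot (u (xbar s))⟫_ℝ| ≤ δ) :
    |exp (-D b) * ⟪y b, Jrot (u (xbar b))⟫_ℝ
      - ε * ∫ s in a..b, exp (-D s) * ⟪Jrot (u (xbar s)), v s⟫_ℝ| ≤ δ * |b - a| := by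
  set φ : ℝ → ℝ := fun s => exp (-D s) * ⟪Jrot (u (xbar s)), v s⟫_ℝ
  have hxbar_cont : Continuous xbar := continuous_iff_continuousAt.2 fun s => (hxbar s).continuousAt
  have hφ : Continuous φ := by
    have hD_cont : Continuous D := continuous_iff_continuousAt.2 fun s => (hD s).continuousAt
    exact hD_cont.neg.rexp.mul
      ((JrotCLM.continuous.comp (hu.continuous.comp hxbar_cont)).inner hv)
  set G : ℝ → ℝ := fun s => exp (-D s) * ⟪y s, Jrot (u (xbar s))⟫_ℝ - ε * ∫ τ in a..s, φ τ
  have hG : ∀ s, HasDerivAt G (exp (-D s) * ⟪R s, Jrot (u (xbar s))⟫_ℝ) s := by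
    intro s
    have hg := hasDerivAt_exp_neg_mul_inner_Jrot (R := fun s => ε • v s + R s) (hu _) (hxbar s)
      (hD s) (by simpa only [add_assoc] using hy s)
    refine (hg.sub ((hφ.integral_hasStrictDerivAt a s).hasDerivAt.const_mul ε)).congr_deriv ?_
    simp only [φ, inner_add_left, real_inner_smul_left, real_inner_comm (v s)]
    ring
  have hGa : G a = 0 := by simp [G, ha]
  have := (convex_uIcc a b).norm_image_sub_le_of_norm_hasDerivWithin_le
    (fun s _ => (hG s).hasDerivWithinAt) hR left_mem_uIcc right_mem_uIcc
  simpa [G, hGa] using this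

lemma exp_neg_mul_MuClosed (hD : ∀ s, HasDerivAt D (div2 u (xbar s)) s)
    (hdiv : Continuous fun s => div2 u (xbar s)) (w : E2 → ℝ → E2) (pu ε p t : ℝ) :
    exp (-D p) * MuClosed u xbar w pu ε p t
      = ε * ∫ τ in pu..p, exp (-D τ) * ⟪Jrot (u (xbar τ)), w (xbar τ) (τ + t - p)⟫_ℝ := by
  rw [MuClosed, mul_left_comm, ← intervalIntegral.integral_const_mul]
  congr 1
  refine intervalIntegral.integral_congr fun τ _ => ?_
  rw [intervalIntegral.integral_eq_sub_of_hasDerivAt (fun s _ => hD s)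
    (hdiv.intervalIntegrable _ _), ← mul_assoc, ← exp_add]
  ring_nf

end Melnikov

lemma IsCompact.exists_forall_closedBall_norm_le {α F : Type*} [PseudoMetricSpace α] [ProperSpace α]
    [SeminormedAddGroup F] {s : Set α} (hs : IsCompact s) {f : α → F} (hf : Continuous f) (r : ℝ) :
    ∃ M, ∀ x ∈ s, ∀ ξ ∈ closedBall x r, ‖f ξ‖ ≤ M := by
  obtain ⟨M, hM⟩ := (hs.cthickening (r := r)).exists_bound_of_continuousOn hf.continuousOn
  exact ⟨M, fun x hx ξ hξ => hM ξ (closedBall_subset_cthickening hx r hξ)⟩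

section Streakline

variable {u : E2 → E2} {K : ℝ≥0} {xbar : ℝ → E2} {D : ℝ → ℝ} {w : E2 → ℝ → E2} {Cw : ℝ}
  {Kw : ℝ≥0} {X : ℝ → E2} {a b pu p t ε M B C₁ : ℝ}

lemma abs_exp_neg_mul_inner_Jrot_sub_MuClosed_le (hu : ContDiff ℝ 2 u)
    (huLip : LipschitzWith K u) (hxbar : ∀ s, HasDerivAt xbar (u (xbar s)) s)
    (hD : ∀ s, HasDerivAt D (div2 u (xbar s)) s) (hw : Continuous (Function.uncurry w))
    (hwbdd : ∀ x s, ‖w x s‖ ≤ Cw) (hwLip : ∀ s, LipschitzWith Kw (fun x => w x s))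
    (hX : ∀ s, HasDerivAt X (u (X s) + ε • w (X s) s) s) (hX0 : X (t - p + pu) = xbar pu)
    (hM : ∀ σ ∈ uIcc pu p, ∀ ξ ∈ closedBall (xbar σ) 1, ‖fderiv ℝ (fderiv ℝ u) ξ‖ ≤ M)
    (hB : ∀ σ ∈ uIcc pu p, exp (-D σ) * ‖u (xbar σ)‖ ≤ B)
    {L : ℝ} (hL : |p - pu| ≤ L) (hC₁ : Cw / (K + 1) * exp ((K + 1) * L) ≤ C₁) (hε : 0 < ε)
    (hεC₁ : ε * C₁ ≤ 1) :
    |exp (-D p) * ⟪X t - xbar p, Jrot (u (xbar p))⟫_ℝ - exp (-D p) * MuClosed u xbar w pu ε p t|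
      ≤ B * ((M * C₁ ^ 2 + Kw * C₁) * ε ^ 2) * L := by
  have hCw : 0 ≤ Cw := (norm_nonneg _).trans (hwbdd 0 0)
  have hxbar_cont : Continuous xbar :=
    continuous_iff_continuousAt.2 fun s => (hxbar s).continuousAt
  set Y : ℝ → E2 := fun σ => X (σ + (t - p))
  have hY : ∀ s, HasDerivAt Y (u (Y s) + ε • w (Y s) (s + (t - p))) s :=
    fun s => (hX _).comp_add_const s _
  have hYpu : Y pu = xbar pu := by rw [← hX0]; simp only [Y]; ring_nf
  have hC₁' : Cw / (K + 1) * exp ((K + 1) * |p - pu|) ≤ C₁ := le_trans (by gcongr) hC₁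
  have hdev : ∀ σ ∈ uIcc pu p, ‖Y σ - xbar σ‖ ≤ ε * C₁ := fun σ hσ =>
    (norm_sub_le_of_hasDerivAt_perturbed huLip hε.le (fun s _ => hwbdd _ _) hxbar hY hYpu σ
      hσ).trans (mul_le_mul_of_nonneg_left hC₁' hε.le)
  set R : ℝ → E2 := fun σ => u (Y σ) + ε • w (Y σ) (σ + (t - p))
    - (u (xbar σ) + ε • w (xbar σ) (σ + (t - p))) - fderiv ℝ u (xbar σ) (Y σ - xbar σ)
  have hy : ∀ s, HasDerivAt (fun σ => Y σ - xbar σ)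
      (fderiv ℝ u (xbar s) (Y s - xbar s) + ε • w (xbar s) (s + t - p) + R s) s := fun s =>
    ((hY s).sub (hxbar s)).congr_deriv (by simp only [R, add_sub_assoc]; module)
  have hR : ∀ σ ∈ uIcc pu p,
      |exp (-D σ) * ⟪R σ, Jrot (u (xbar σ))⟫_ℝ| ≤ B * ((M * C₁ ^ 2 + Kw * C₁) * ε ^ 2) := by
    intro σ hσ
    have hM0 : 0 ≤ M := (norm_nonneg (fderiv ℝ (fderiv ℝ u) (xbar σ))).trans
      (hM σ hσ _ (mem_closedBall_self zero_le_one))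
    have hRσ : ‖R σ‖ ≤ (M * C₁ ^ 2 + Kw * C₁) * ε ^ 2 := calc
      ‖R σ‖ ≤ M * ‖Y σ - xbar σ‖ ^ 2 + ε * (Kw * ‖Y σ - xbar σ‖) := by
          have := norm_add_smul_sub_sub_fderiv_le hu (hwLip (σ + (t - p))) hε.le fun ξ hξ =>
            hM σ hσ ξ (closedBall_subset_closedBall ((hdev σ hσ).trans hεC₁) hξ)
          rwa [add_sub_cancel] at this
      _ ≤ M * (ε * C₁) ^ 2 + ε * (Kw * (ε * C₁)) := by have := hdev σ hσ; gcongr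
      _ = (M * C₁ ^ 2 + Kw * C₁) * ε ^ 2 := by ring
    calc |exp (-D σ) * ⟪R σ, Jrot (u (xbar σ))⟫_ℝ|
        ≤ exp (-D σ) * ‖u (xbar σ)‖ * ‖R σ‖ := by
          rw [abs_mul, abs_of_pos (exp_pos _), mul_assoc]
          gcongr
          exact (abs_real_inner_le_norm _ _).trans_eq (by rw [norm_Jrot, mul_comm])
      _ ≤ B * ((M * C₁ ^ 2 + Kw * C₁) * ε ^ 2) :=
          mul_le_mul (hB σ hσ) hRσ (norm_nonneg _)
            ((by positivity : 0 ≤ exp (-D σ) * ‖u (xbar σ)‖).trans (hB σ hσ))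
  have hv : Continuous fun s => w (xbar s) (s + t - p) :=
    hw.comp (hxbar_cont.prodMk (by fun_prop))
  have hdiv : Continuous fun s => div2 u (xbar s) :=
    (continuous_div2 (hu.of_le one_le_two)).comp hxbar_cont
  rw [exp_neg_mul_MuClosed hD hdiv, show X t = Y p by simp [Y]]
  exact (abs_exp_neg_mul_inner_Jrot_sub_integral_le (hu.differentiable two_ne_zero) hxbar hD
    hv hy (by simp [hYpu]) hR).trans
      (mul_le_mul_of_nonneg_left hL ((abs_nonneg _).trans (hR pu left_mem_uIcc)))

lemma abs_inner_normal_sub_MuClosed_div_le {B₂ : ℝ} (hu : ContDiff ℝ 2 u)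
    (huLip : LipschitzWith K u) (hxbar : ∀ s, HasDerivAt xbar (u (xbar s)) s)
    (hune : u (xbar p) ≠ 0) (hD : ∀ s, HasDerivAt D (div2 u (xbar s)) s)
    (hw : Continuous (Function.uncurry w))
    (hwbdd : ∀ x s, ‖w x s‖ ≤ Cw) (hwLip : ∀ s, LipschitzWith Kw (fun x => w x s))
    (hX : ∀ s, HasDerivAt X (u (X s) + ε • w (X s) s) s) (hX0 : X (t - p + pu) = xbar pu)
    (hpu : pu ∈ Icc a b) (hp : p ∈ Icc a b)
    (hM : ∀ σ ∈ Icc a b, ∀ ξ ∈ closedBall (xbar σ) 1, ‖fderiv ℝ (fderiv ℝ u) ξ‖ ≤ M)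
    (hB : ∀ σ ∈ Icc a b, exp (-D σ) * ‖u (xbar σ)‖ ≤ B)
    (hB₂ : ∀ σ ∈ Icc a b, exp (D σ) / ‖u (xbar σ)‖ ≤ B₂)
    (hC₁ : Cw / (K + 1) * exp ((K + 1) * (b - a)) ≤ C₁) (hε : 0 < ε) (hεC₁ : ε * C₁ ≤ 1) :
    |⟪X t - xbar p, (‖u (xbar p)‖)⁻¹ • Jrot (u (xbar p))⟫_ℝ
      - MuClosed u xbar w pu ε p t / ‖u (xbar p)‖|
      ≤ B₂ * (B * (M * C₁ ^ 2 + Kw * C₁) * (b - a) * ε ^ 2) := by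
  have hwin : uIcc pu p ⊆ Icc a b := uIcc_subset_Icc hpu hp
  have hlen : |p - pu| ≤ b - a :=
    abs_sub_le_iff.2 ⟨by linarith [hp.2, hpu.1], by linarith [hp.1, hpu.2]⟩
  have key := abs_exp_neg_mul_inner_Jrot_sub_MuClosed_le hu huLip hxbar hD hw hwbdd hwLip hX hX0
    (fun σ hσ => hM σ (hwin hσ)) (fun σ hσ => hB σ (hwin hσ)) hlen hC₁ hε hεC₁
  have hup : 0 < ‖u (xbar p)‖ := norm_pos_iff.2 hune
  calc _ = exp (D p) / ‖u (xbar p)‖ * |exp (-D p) * ⟪X t - xbar p, Jrot (u (xbar p))⟫_ℝ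
          - exp (-D p) * MuClosed u xbar w pu ε p t| := by
        rw [← mul_sub, abs_mul, abs_of_pos (exp_pos _), real_inner_smul_right, div_eq_inv_mul,
          ← mul_sub, abs_mul, abs_of_pos (inv_pos.2 hup), exp_neg]
        field_simp
    _ ≤ B₂ * (B * ((M * C₁ ^ 2 + Kw * C₁) * ε ^ 2) * (b - a)) := by
        gcongr
        · exact (by positivity : 0 ≤ exp (D p) / ‖u (xbar p)‖).trans (hB₂ p hp)
        · exact hB₂ p hp
    _ = B₂ * (B * (M * C₁ ^ 2 + Kw * C₁) * (b - a) * ε ^ 2) := by ring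

lemma exists_bounds_on_Icc (hu : ContDiff ℝ 2 u) (hxbar : ∀ s, HasDerivAt xbar (u (xbar s)) s)
    (hune : ∀ s, u (xbar s) ≠ 0) (hD : ∀ s, HasDerivAt D (div2 u (xbar s)) s) (a b : ℝ) :
    ∃ M B B₂ : ℝ, (∀ σ ∈ Icc a b, ∀ ξ ∈ closedBall (xbar σ) 1, ‖fderiv ℝ (fderiv ℝ u) ξ‖ ≤ M)
      ∧ (∀ σ ∈ Icc a b, exp (-D σ) * ‖u (xbar σ)‖ ≤ B)
      ∧ (∀ σ ∈ Icc a b, exp (D σ) / ‖u (xbar σ)‖ ≤ B₂) := by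
  have hxbar_cont : Continuous xbar :=
    continuous_iff_continuousAt.2 fun s => (hxbar s).continuousAt
  have hD_cont : Continuous D := continuous_iff_continuousAt.2 fun s => (hD s).continuousAt
  have hu_cont : Continuous u := hu.continuous
  obtain ⟨M, hM⟩ := (isCompact_Icc.image hxbar_cont).exists_forall_closedBall_norm_le
    ((hu.fderiv_right one_add_one_eq_two.le).continuous_fderiv one_ne_zero) 1
  obtain ⟨B, hB⟩ := (isCompact_Icc (a := a) (b := b)).bddAbove_image
    (f := fun σ => exp (-D σ) * ‖u (xbar σ)‖) (by fun_prop)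
  obtain ⟨B₂, hB₂⟩ := (isCompact_Icc (a := a) (b := b)).bddAbove_image
    (f := fun σ => exp (D σ) / ‖u (xbar σ)‖)
    (Continuous.continuousOn <| by
      fun_prop (disch := exact fun σ => norm_ne_zero_iff.2 (hune σ)))
  exact ⟨M, B, B₂, fun σ hσ => hM (xbar σ) (mem_image_of_mem xbar hσ),
    fun σ hσ => hB (mem_image_of_mem _ hσ), fun σ hσ => hB₂ (mem_image_of_mem _ hσ)⟩

end Streakline

theorem upstream_streakline_closed_general
    (u : E2 → E2) (hu : ContDiff ℝ 2 u)
    (K : ℝ≥0) (huLip : LipschitzWith K u)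
    (xbar : ℝ → E2) (hxbar : ∀ p : ℝ, HasDerivAt xbar (u (xbar p)) p)
    (hune : ∀ p : ℝ, u (xbar p) ≠ 0)
    (pu : ℝ)
    (w : E2 → ℝ → E2) (hw : ContDiff ℝ 1 (Function.uncurry w))
    (Cw : ℝ) (hwbdd : ∀ (x : E2) (t : ℝ), ‖w x t‖ ≤ Cw)
    (Kw : ℝ≥0) (hwLip : ∀ t : ℝ, LipschitzWith Kw (fun x => w x t)) :
    ∀ P > (0:ℝ), ∃ C > (0:ℝ), ∃ ε₀ > (0:ℝ),
      ∀ p ∈ Set.Icc (-P) P, ∀ t : ℝ, ∀ ε ∈ Set.Ioc (0:ℝ) ε₀,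
        ∀ X : ℝ → E2,
          (∀ s : ℝ, HasDerivAt X (u (X s) + ε • w (X s) s) s) →
          X (t - p + pu) = xbar pu →
          |⟪X t - xbar p, (‖u (xbar p)‖)⁻¹ • Jrot (u (xbar p))⟫_ℝ
            - MuClosed u xbar w pu ε p t / ‖u (xbar p)‖| ≤ C * ε ^ 2 := by
  intro P hP
  set A := |pu| + P
  have hdiv : Continuous fun s => div2 u (xbar s) := (continuous_div2 (hu.of_le one_le_two)).comp
    (continuous_iff_continuousAt.2 fun s => (hxbar s).continuousAt)
  obtain ⟨D, hD⟩ : ∃ D : ℝ → ℝ, ∀ s, HasDerivAt D (div2 u (xbar s)) s :=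
    ⟨_, fun s => (hdiv.integral_hasStrictDerivAt 0 s).hasDerivAt⟩
  obtain ⟨M, B₁, B₂, hM, hB₁, hB₂⟩ := exists_bounds_on_Icc hu hxbar hune hD (-A) A
  set C₁ := Cw / (K + 1) * exp ((K + 1) * (A - -A))
  set Q := B₂ * (B₁ * (M * C₁ ^ 2 + Kw * C₁) * (A - -A))
  refine ⟨|Q| + 1, by positivity, (|C₁| + 1)⁻¹, by positivity, ?_⟩
  rintro p ⟨hpl, hpr⟩ t ε ⟨hε, hε₀⟩ X hX hX0
  have hεC₁ : ε * C₁ ≤ 1 := calc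
    ε * C₁ ≤ ε * (|C₁| + 1) := by gcongr; linarith [le_abs_self C₁]
    _ ≤ (|C₁| + 1)⁻¹ * (|C₁| + 1) := by gcongr
    _ = 1 := inv_mul_cancel₀ (by positivity)
  calc _ ≤ B₂ * (B₁ * (M * C₁ ^ 2 + Kw * C₁) * (A - -A) * ε ^ 2) :=
        abs_inner_normal_sub_MuClosed_div_le hu huLip hxbar (hune p) hD hw.continuous hwbdd hwLip
          hX hX0 ⟨by linarith [neg_abs_le pu], by linarith [le_abs_self pu]⟩
          ⟨by linarith [abs_nonneg pu], by linarith [abs_nonneg pu]⟩ hM hB₁ hB₂ le_rfl hε hεC₁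
    _ = Q * ε ^ 2 := by ring
    _ ≤ (|Q| + 1) * ε ^ 2 := by gcongr; linarith [le_abs_self Q]

/-- **Upstream streakline theorem, closed interface.**  For a steady C² globally
Lipschitz planar field `u` with a nonvanishing periodic streakline `x̄` of
period `pd − pu`, and a bounded C¹ agitation `w` vanishing at the anchor point
`a = x̄(pu) = x̄(pd)`, the normal displacement of the agitated upstream
streakline `x_ε^u(p,t)` from `x̄(p)` equals `M^u_ε(p,t)/|u(x̄(p))|` up to an
error of order `ε²`, uniformly for `p ∈ [−P,P]` and `t ∈ ℝ`. -/
theorem upstream_streakline_closed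
    (u : E2 → E2) (hu : ContDiff ℝ 2 u)
    (K : ℝ≥0) (huLip : LipschitzWith K u)
    (xbar : ℝ → E2) (hxbar : ∀ p : ℝ, HasDerivAt xbar (u (xbar p)) p)
    (hune : ∀ p : ℝ, u (xbar p) ≠ 0)
    (pu pd : ℝ) (hpp : pu < pd)
    (hper : Function.Periodic xbar (pd - pu))
    (w : E2 → ℝ → E2) (hw : ContDiff ℝ 1 (Function.uncurry w))
    (Cw : ℝ) (hwbdd : ∀ (x : E2) (t : ℝ), ‖w x t‖ ≤ Cw)
    (Kw : ℝ≥0) (hwLip : ∀ t : ℝ, LipschitzWith Kw (fun x => w x t))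
    (hanchor : ∀ t : ℝ, w (xbar pu) t = 0) :
    ∀ P > (0:ℝ), ∃ C > (0:ℝ), ∃ ε₀ > (0:ℝ),
      ∀ p ∈ Set.Icc (-P) P, ∀ t : ℝ, ∀ ε ∈ Set.Ioc (0:ℝ) ε₀,
        ∀ X : ℝ → E2,
          (∀ s : ℝ, HasDerivAt X (u (X s) + ε • w (X s) s) s) →
          X (t - p + pu) = xbar pu →
          |⟪X t - xbar p, (‖u (xbar p)‖)⁻¹ • Jrot (u (xbar p))⟫_ℝ
            - MuClosed u xbar w pu ε p t / ‖u (xbar p)‖| ≤ C * ε ^ 2 :=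
  upstream_streakline_closed_general u hu K huLip xbar hxbar hune pu w hw Cw hwbdd Kw hwLip
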